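/- Let t ≥ 1 be an integer, d ≥ 1, λ_x ∈ (0,1], 0 < δ ≤ 1/8. If t ≥ (256/λ_x²) log(128d/(λ_x²δ)), then tλ_x/2 ≥ (1/3) sqrt(18 t A + A²) + A/3, where A = log((t+1)(t+3)d/δ). -/

import Mathlib

/-!
Put `x = t λ²`. The threshold says `log (128 d / (λ² δ)) ≤ x / 256`, and since `log y ≤ y / 2` this
inverts to `log (t d / δ) ≤ x / 128`. As `(t + 1)(t + 3) ≤ 8 t² ≤ t² (d / δ)`, the Freedman exponent
satisfies `A ≤ 2 log (t d / δ) ≤ t λ² / 64`, which is small enough for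
`√(18 t A + A²) ≤ (9/16) t λ + A` and `A ≤ t λ / 64` to give the claim.
-/

open Real

lemma Real.log_le_half_self {x : ℝ} (hx : 0 < x) : log x ≤ x / 2 := by
  have h := log_le_sub_one_of_pos (half_pos hx)
  rw [log_div hx.ne' two_ne_zero] at h
  linarith [log_two_lt_d9]

lemma Real.mul_log_mul_le_of_two_mul_mul_log_le {a b t : ℝ} (ha : 0 < a) (hb : 0 < b) (ht : 0 < t)
    (h : 2 * a * log (a * b) ≤ t) : a * log (b * t) ≤ t := by
  have hsplit : log (b * t) = log (a * b) + log (t / a) := by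
    rw [← log_mul (by positivity) (by positivity)]
    congr 1
    field_simp
  have hab : log (a * b) ≤ t / (2 * a) := by
    rw [le_div_iff₀ (by positivity)]
    linarith
  have hta : log (t / a) ≤ t / (2 * a) := by
    have := log_le_half_self (div_pos ht ha)
    rwa [div_div, mul_comm a] at this
  calc a * log (b * t) ≤ a * (t / (2 * a) + t / (2 * a)) := by
        rw [hsplit]; gcongr
    _ = t := by field_simp; norm_num

lemma Real.log_succ_mul_add_three_mul_le {t c : ℝ} (ht : 1 ≤ t) (hc : 8 ≤ c) :
    log ((t + 1) * (t + 3) * c) ≤ 2 * log (t * c) := by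
  rw [show 2 * log (t * c) = log ((t * c) ^ 2) by rw [log_pow]; norm_num]
  refine log_le_log (by positivity) ?_
  calc (t + 1) * (t + 3) * c ≤ 8 * t ^ 2 * c :=
        mul_le_mul_of_nonneg_right (by nlinarith) (by positivity)
    _ ≤ c * t ^ 2 * c := by gcongr
    _ = (t * c) ^ 2 := by ring

lemma freedman_bound_of_le {t A lam : ℝ} (ht : 0 ≤ t) (hA0 : 0 ≤ A) (hlam0 : 0 < lam)
    (hlam1 : lam ≤ 1) (hA : A ≤ t * lam ^ 2 / 64) :
    (1 / 3) * √(18 * t * A + A ^ 2) + A / 3 ≤ t * lam / 2 := by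
  have htl : 0 ≤ t * lam := mul_nonneg ht hlam0.le
  have hsqrt : √(18 * t * A + A ^ 2) ≤ 9 / 16 * (t * lam) + A := by
    rw [sqrt_le_left (by positivity)]
    nlinarith [mul_le_mul_of_nonneg_left hA (by linarith : (0 : ℝ) ≤ 18 * t), mul_nonneg htl hA0]
  have hA' : A ≤ t * lam / 64 := by
    nlinarith [mul_le_mul_of_nonneg_left hlam1 htl]
  linarith

theorem freedman_threshold_ineq (t d : ℕ) (ht : 1 ≤ t) (hd : 1 ≤ d)
    (lamx δ : ℝ) (hlamx0 : 0 < lamx) (hlamx1 : lamx ≤ 1)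
    (hδ0 : 0 < δ) (hδ : δ ≤ 1 / 8)
    (hT : 256 / lamx ^ 2 * Real.log (128 * d / (lamx ^ 2 * δ)) ≤ t) :
    (1 / 3) * Real.sqrt (18 * t * Real.log ((t + 1) * (t + 3) * d / δ) +
        Real.log ((t + 1) * (t + 3) * d / δ) ^ 2) +
      Real.log ((t + 1) * (t + 3) * d / δ) / 3 ≤ t * lamx / 2 := by
  have ht' : (1 : ℝ) ≤ t := by exact_mod_cast ht
  have hc : 8 ≤ (d : ℝ) / δ := by
    rw [le_div_iff₀ hδ0]
    nlinarith [(by exact_mod_cast hd : (1 : ℝ) ≤ d)]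
  have hlog : log (t * (d / δ)) ≤ t * lamx ^ 2 / 128 := by
    have h := mul_log_mul_le_of_two_mul_mul_log_le (a := 128 / lamx ^ 2) (b := d / δ) (t := t)
      (by positivity) (by positivity) (by positivity) (by convert hT using 3 <;> ring)
    rwa [mul_comm (d / δ : ℝ), mul_comm, ← le_div_iff₀ (by positivity), div_div_eq_mul_div] at h
  have hA : log ((t + 1) * (t + 3) * d / δ) ≤ t * lamx ^ 2 / 64 := by
    rw [mul_div_assoc]
    linarith [log_succ_mul_add_three_mul_le ht' hc]
  refine freedman_bound_of_le (by positivity) (log_nonneg ?_) hlamx0 hlamx1 hA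
  rw [mul_div_assoc]
  nlinarith [mul_le_mul (by nlinarith : (1 : ℝ) ≤ (t + 1) * (t + 3)) hc (by norm_num) (by positivity)]
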